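/- arXiv:2010.12783 — 5 statements merged into one kernel-verified Lean document; each statement's English description precedes it below -/
import Mathlib

section
/- For any multinomial opinion with belief masses b_1,...,b_K ≥ 0 and vacuity u_v ≥ 0 satisfying Σ b_k + u_v = 1, the dissonance diss = Σ_k (b_k · Σ_{j≠k} b_j·Bal(b_j,b_k) / Σ_{j≠k} b_j) satisfies u_v + diss ≤ 1. -/
open Finset

/-- Balance function of Subjective Logic. -/
noncomputable def Bal (x y : ℝ) : ℝ :=
  if x * y ≠ 0 then 1 - |x - y| / (x + y) else 0

/-- Dissonance of a multinomial opinion with belief masses `b` (terms with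
zero denominator are zero, via division-by-zero convention). -/
noncomputable def diss {K : ℕ} (b : Fin K → ℝ) : ℝ :=
  ∑ k, b k * (∑ j ∈ Finset.univ.erase k, b j * Bal (b j) (b k)) /
      (∑ j ∈ Finset.univ.erase k, b j)

theorem vacuity_add_dissonance_le_one {K : ℕ} (b : Fin K → ℝ) (u : ℝ)
    (hb : ∀ k, 0 ≤ b k) (hu : 0 ≤ u) (hsum : (∑ k, b k) + u = 1) :
    u + diss b ≤ 1 := by
  have hBal : ∀ x y : ℝ, 0 ≤ x → 0 ≤ y → Bal x y ≤ 1 := by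
    intro x y hx hy
    unfold Bal
    split_ifs with h
    · have hxy : 0 < x + y := by
        rcases h.lt_or_gt with h' | h'
        · nlinarith
        · nlinarith
      have : 0 ≤ |x - y| / (x + y) := div_nonneg (abs_nonneg _) hxy.le
      linarith
    · norm_num
  have hterm : ∀ k : Fin K,
      b k * (∑ j ∈ Finset.univ.erase k, b j * Bal (b j) (b k)) /
        (∑ j ∈ Finset.univ.erase k, b j) ≤ b k := by
    intro k
    set D := ∑ j ∈ Finset.univ.erase k, b j with hD
    have hD0 : 0 ≤ D := Finset.sum_nonneg fun j _ => hb j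
    rcases eq_or_lt_of_le hD0 with hz | hpos
    · have hall : ∀ j ∈ Finset.univ.erase k, b j = 0 := by
        intro j hj
        exact (Finset.sum_eq_zero_iff_of_nonneg (fun j _ => hb j)).mp hz.symm j hj
      have : (∑ j ∈ Finset.univ.erase k, b j * Bal (b j) (b k)) = 0 :=
        Finset.sum_eq_zero fun j hj => by rw [hall j hj]; ring
      rw [this]
      simp [hb k]
    · have hnum : (∑ j ∈ Finset.univ.erase k, b j * Bal (b j) (b k)) ≤ D := by
        rw [hD]
        apply Finset.sum_le_sum
        intro j _
        have := hBal (b j) (b k) (hb j) (hb k)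
        nlinarith [hb j]
      rw [div_le_iff₀ hpos]
      nlinarith [hb k]
  have : diss b ≤ ∑ k, b k := by
    unfold diss
    exact Finset.sum_le_sum fun k _ => hterm k
  linarith
end

section
/- For a Dirichlet distribution Dir(α) on the K-simplex, the expected pairwise KL divergence between two independently sampled categorical distributions equals (K−1)/S, where S = Σ_i α_i. -/
/-!
By the recurrence `ψ(x + 1) = ψ(x) + 1/x`, the `i`-th summand collapses to
`(α i / S) (1/α i - 1/S) = 1/S - α i/S²`, and summing over `i` gives `K/S - 1/S`.
-/

open Finset

/-- The digamma function `ψ = (log ∘ Γ)'`. -/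
noncomputable def digamma (x : ℝ) : ℝ :=
  deriv (fun y => Real.log (Real.Gamma y)) x

theorem Real.deriv_Gamma_add_one {s : ℝ} (hs : ∀ m : ℕ, s ≠ -m) :
    deriv Gamma (s + 1) = Gamma s + s * deriv Gamma s := by
  have hs0 : s ≠ 0 := by simpa using hs 0
  have hrec : (fun y => Gamma (y + 1)) =ᶠ[nhds s] fun y => y * Gamma y :=
    Filter.eventually_of_mem (isOpen_ne.mem_nhds hs0) fun y hy => Gamma_add_one hy
  rw [← deriv_comp_add_const, hrec.deriv_eq,
    deriv_fun_mul differentiableAt_fun_id (differentiableAt_Gamma hs), deriv_id'', one_mul]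

theorem digamma_eq_deriv_Gamma_div_Gamma {x : ℝ} (hx : ∀ m : ℕ, x ≠ -m) :
    digamma x = deriv Real.Gamma x / Real.Gamma x :=
  deriv.log (Real.differentiableAt_Gamma hx) (Real.Gamma_ne_zero hx)

theorem digamma_add_one {x : ℝ} (hx : ∀ m : ℕ, x ≠ -m) :
    digamma (x + 1) = digamma x + x⁻¹ := by
  have hx0 : x ≠ 0 := by simpa using hx 0
  have hx1 : ∀ m : ℕ, x + 1 ≠ -m := fun m h => hx (m + 1) (by push_cast; linarith)
  rw [digamma_eq_deriv_Gamma_div_Gamma hx1, digamma_eq_deriv_Gamma_div_Gamma hx,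
    Real.deriv_Gamma_add_one hx, Real.Gamma_add_one hx0]
  field_simp [Real.Gamma_ne_zero hx]
  ring

theorem digamma_add_one_of_pos {x : ℝ} (hx : 0 < x) : digamma (x + 1) = digamma x + x⁻¹ :=
  digamma_add_one fun m h => by linarith [h ▸ hx, (m.cast_nonneg : (0 : ℝ) ≤ m)]

theorem sum_div_mul_inv_sub_inv {ι : Type*} (s : Finset ι) (w : ι → ℝ) (hw : ∀ i ∈ s, w i ≠ 0) :
    ∑ i ∈ s, w i / (∑ j ∈ s, w j) * ((w i)⁻¹ - (∑ j ∈ s, w j)⁻¹) =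
      ((#s : ℝ) - 1) / ∑ j ∈ s, w j := by
  set S := ∑ j ∈ s, w j
  calc ∑ i ∈ s, w i / S * ((w i)⁻¹ - S⁻¹) = ∑ i ∈ s, (S⁻¹ - w i / S * S⁻¹) :=
        sum_congr rfl fun i hi => by
          rw [mul_sub, div_mul_eq_mul_div, mul_inv_cancel₀ (hw i hi), one_div]
    _ = ((#s : ℝ) - 1) / S := by
        rw [sum_sub_distrib, ← sum_mul, ← sum_div, sum_const, nsmul_eq_mul]
        rcases eq_or_ne S 0 with hS | hS
        · simp [hS]
        · rw [div_self hS]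
          ring

theorem expected_pairwise_KL_dirichlet_general {K : ℕ}
    (α : Fin K → ℝ) (hα : ∀ i, 0 < α i) (S : ℝ) (hS : S = ∑ i, α i) :
    -(∑ i, (α i / S) * (digamma (α i) - digamma S)) +
      ∑ i, (α i / S) * (digamma (α i + 1) - digamma (S + 1)) =
      ((K : ℝ) - 1) / S := by
  subst hS
  have hS_pos (i : Fin K) : 0 < ∑ j, α j :=
    (hα i).trans_le (single_le_sum (fun j _ => (hα j).le) (mem_univ i))
  calc _ = ∑ i, α i / (∑ j, α j) * ((α i)⁻¹ - (∑ j, α j)⁻¹) := by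
        rw [← sum_neg_distrib, ← sum_add_distrib]
        refine sum_congr rfl fun i _ => ?_
        rw [digamma_add_one_of_pos (hα i), digamma_add_one_of_pos (hS_pos i)]
        ring
    _ = ((K : ℝ) - 1) / ∑ j, α j := by
        rw [sum_div_mul_inv_sub_inv univ α fun i _ => (hα i).ne', card_univ, Fintype.card_fin]

/-- The expected pairwise KL divergence between two categorical distributions
with parameters sampled i.i.d. from `Dir(α)` equals `(K−1)/S`. -/
theorem expected_pairwise_KL_dirichlet {K : ℕ} (hK : 2 ≤ K)
    (α : Fin K → ℝ) (hα : ∀ i, 0 < α i) (S : ℝ) (hS : S = ∑ i, α i) :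
    -(∑ i, (α i / S) * (digamma (α i) - digamma S)) +
      ∑ i, (α i / S) * (digamma (α i + 1) - digamma (S + 1)) =
      ((K : ℝ) - 1) / S :=
  expected_pairwise_KL_dirichlet_general α hα S hS
end

section
/- The sequence a_K = (1/ln K)·Σ_{k=2}^K 1/k is strictly increasing in the integer K ≥ 2. -/
open Finset

private lemma aux_consec (n : ℕ) (hn : 1 ≤ n) :
    ((n : ℝ) + 2) * (Real.log ((n : ℝ) + 2) - Real.log ((n : ℝ) + 1)) <
      ((n : ℝ) + 1) * (Real.log ((n : ℝ) + 1) - Real.log (n : ℝ)) := by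
  set x : ℝ := (n : ℝ) with hx
  have hx1 : (1 : ℝ) ≤ x := by rw [hx]; exact_mod_cast hn
  have hxpos : 0 < x := by linarith
  set a : ℝ := 1 / (x * (x + 2)) with hadef
  have ha : (0 : ℝ) ≤ a := by positivity
  have hBern : 1 + ((n : ℝ) + 1) * a ≤ (1 + a) ^ (n + 1) := by
    have := one_add_mul_le_pow (a := a) (by linarith) (n + 1)
    push_cast at this
    linarith
  have h1 : (x + 2) / (x + 1) < 1 + (x + 1) * a := by
    have key : 1 / (x + 1) < (x + 1) * a := by
      rw [hadef, mul_one_div, div_lt_div_iff₀ (by linarith) (by positivity)]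
      nlinarith
    have : (x + 2) / (x + 1) = 1 + 1 / (x + 1) := by
      field_simp; ring
    linarith
  have hlt : (x + 2) / (x + 1) < (1 + a) ^ (n + 1) := by
    rw [hx] at h1; push_cast at h1 ⊢; linarith
  have hlog := Real.log_lt_log (by positivity) hlt
  have hrw : (1 : ℝ) + a = (x + 1) ^ 2 / (x * (x + 2)) := by
    rw [hadef]; field_simp; ring
  rw [Real.log_pow, Real.log_div (by positivity) (by positivity), hrw,
    Real.log_div (by positivity) (by positivity),
    Real.log_mul (by positivity) (by positivity), Real.log_pow] at hlog
  push_cast at hlog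
  nlinarith [hlog]

private lemma aux_anti (n m : ℕ) (hn : 1 ≤ n) (hnm : n < m) :
    ((m : ℝ) + 1) * (Real.log ((m : ℝ) + 1) - Real.log (m : ℝ)) <
      ((n : ℝ) + 1) * (Real.log ((n : ℝ) + 1) - Real.log (n : ℝ)) := by
  induction m with
  | zero => omega
  | succ m ih =>
    rcases Nat.lt_succ_iff_lt_or_eq.mp hnm with h | h
    · have h1 := aux_consec m (by omega)
      have h2 := ih h
      push_cast at h1 ⊢
      ring_nf at h1 h2 ⊢
      linarith
    · subst h
      have h1 := aux_consec n hn
      push_cast at h1 ⊢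
      ring_nf at h1 ⊢
      linarith

private lemma aux_telescope (K : ℕ) (hK : 2 ≤ K) :
    ∑ k ∈ Finset.Icc 2 K, (Real.log (k : ℝ) - Real.log ((k : ℝ) - 1)) = Real.log K := by
  induction K with
  | zero => omega
  | succ K ih =>
    rcases Nat.lt_or_ge K 2 with h | h
    · interval_cases K
      · omega
      · norm_num
    · rw [Finset.sum_Icc_succ_top (by omega), ih h]
      push_cast
      have h1 : (K:ℝ) + 1 - 1 = K := by ring
      rw [h1]
      ring

theorem aleatoric_seq_strictMono (K : ℕ) (hK : 2 ≤ K) :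
    (∑ k ∈ Finset.Icc 2 K, (1 : ℝ) / k) / Real.log K <
      (∑ k ∈ Finset.Icc 2 (K + 1), (1 : ℝ) / k) / Real.log (K + 1) := by
  have hK1 : (1:ℝ) < (K:ℝ) := by exact_mod_cast Nat.lt_of_lt_of_le one_lt_two hK
  have hlogK : 0 < Real.log K := Real.log_pos hK1
  have hlogK1 : 0 < Real.log ((K:ℝ) + 1) := Real.log_pos (by linarith)
  set c : ℝ := Real.log ((K:ℝ) + 1) - Real.log K with hc
  have hcpos : 0 < c := sub_pos.mpr (Real.log_lt_log (by linarith) (by linarith))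
  have hpt : ∀ k ∈ Finset.Icc 2 K,
      (1:ℝ)/k * (((K:ℝ) + 1) * c) < Real.log k - Real.log ((k:ℝ) - 1) := by
    intro k hk
    simp only [Finset.mem_Icc] at hk
    obtain ⟨hk2, hkK⟩ := hk
    have hmain := aux_anti (k - 1) K (by omega) (by omega)
    have hc1 : ((k - 1 : ℕ) : ℝ) = (k:ℝ) - 1 := by
      have : 1 ≤ k := by omega
      push_cast [this]; ring
    rw [hc1] at hmain
    have h2 : ((k:ℝ) - 1) + 1 = (k:ℝ) := by ring
    rw [h2] at hmain
    have hkpos : (0:ℝ) < k := by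
      have : 0 < k := by omega
      exact_mod_cast this
    rw [div_mul_eq_mul_div, one_mul, div_lt_iff₀ hkpos]
    nlinarith [hmain]
  have hsum := Finset.sum_lt_sum_of_nonempty (Finset.nonempty_Icc.mpr hK) hpt
  rw [← Finset.sum_mul, aux_telescope K hK] at hsum
  set S : ℝ := ∑ k ∈ Finset.Icc 2 K, (1:ℝ)/k with hS
  have hfin : S * c < Real.log K / ((K:ℝ) + 1) := by
    rw [lt_div_iff₀ (by positivity)]
    nlinarith [hsum]
  rw [Finset.sum_Icc_succ_top (by omega : 2 ≤ K + 1)]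
  push_cast
  rw [div_lt_div_iff₀ hlogK hlogK1]
  have hexp : S * c = S * Real.log ((K:ℝ) + 1) - S * Real.log K := by rw [hc]; ring
  have hKpos : (0:ℝ) < (K:ℝ) + 1 := by positivity
  have h4 : Real.log K / ((K:ℝ) + 1) = 1 / ((K:ℝ) + 1) * Real.log K := by ring
  rw [h4] at hfin
  nlinarith [hfin, hexp]
end

section
/- For all integers N ≥ 2, Σ_{n=2}^N 1/n < ln N / ((N+1)·ln((N+1)/N)). -/
/-!
The function `x ↦ x log (x / (x - 1))` is strictly decreasing on `(1, ∞)`: its derivative is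
`log y - (y - 1)` for `y = x / (x - 1)`. Hence for `2 ≤ n ≤ N` the right-hand denominator
`L = (N + 1) log ((N + 1) / N)` is less than `n log (n / (n - 1))`, i.e. `L / n < log (n / (n - 1))`,
and summing over `n` the right-hand side telescopes to `log N`.
-/

open Finset Real

theorem hasDerivAt_mul_log_div_sub_one {x : ℝ} (hx : 1 < x) :
    HasDerivAt (fun x => x * log (x / (x - 1))) (log (x / (x - 1)) - 1 / (x - 1)) x := by
  have hx0 : x ≠ 0 := by positivity
  have hx1 : x - 1 ≠ 0 := sub_ne_zero.2 hx.ne'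
  have hdiv : HasDerivAt (fun x => x / (x - 1)) (-1 / (x - 1) ^ 2) x :=
    ((hasDerivAt_id' x).fun_div ((hasDerivAt_id' x).sub_const 1) hx1).congr_deriv (by ring)
  refine ((hasDerivAt_id' x).fun_mul (hdiv.log (div_ne_zero hx0 hx1))).congr_deriv ?_
  field_simp
  ring

theorem strictAntiOn_mul_log_div_sub_one :
    StrictAntiOn (fun x : ℝ => x * log (x / (x - 1))) (Set.Ioi 1) := by
  refine strictAntiOn_of_deriv_neg (convex_Ioi 1)
    (fun x hx => (hasDerivAt_mul_log_div_sub_one hx).continuousAt.continuousWithinAt) ?_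
  intro x hx
  rw [interior_Ioi] at hx
  have hx1 : 0 < x - 1 := sub_pos.2 hx
  rw [(hasDerivAt_mul_log_div_sub_one hx).deriv, sub_neg]
  calc log (x / (x - 1)) < x / (x - 1) - 1 :=
        log_lt_sub_one_of_pos (div_pos (by linarith) hx1) (div_ne_one_of_ne (a := x) (by linarith))
    _ = 1 / (x - 1) := by field_simp; ring

theorem sum_Icc_log_div_sub_one (N : ℕ) :
    ∑ n ∈ Icc 2 N, log (n / (n - 1)) = log N := by
  induction N with
  | zero => simp
  | succ N ih =>
    rcases Nat.eq_zero_or_pos N with rfl | hN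
    · simp
    · rw [sum_Icc_succ_top (by omega), ih, Nat.cast_succ, add_sub_cancel_right,
        log_div (by positivity) (by positivity)]
      ring

theorem harmonic_sum_lt (N : ℕ) (hN : 2 ≤ N) :
    ∑ n ∈ Finset.Icc 2 N, (1 : ℝ) / n <
      Real.log N / (((N : ℝ) + 1) * Real.log (((N : ℝ) + 1) / N)) := by
  set L := ((N : ℝ) + 1) * log (((N : ℝ) + 1) / N)
  have hL : 0 < L := by
    have : (1 : ℝ) < (N + 1) / N := by rw [lt_div_iff₀ (by positivity)]; linarith
    exact mul_pos (by positivity) (log_pos this)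
  have hterm : ∀ n ∈ Icc 2 N, 1 / (n : ℝ) * L < log (n / (n - 1)) := by
    intro n hn
    have h2n : (2 : ℝ) ≤ n := by exact_mod_cast (mem_Icc.1 hn).1
    have hnN : (n : ℝ) ≤ N := by exact_mod_cast (mem_Icc.1 hn).2
    have hL_lt : L < n * log (n / (n - 1)) := by
      simpa [L] using strictAntiOn_mul_log_div_sub_one (show (1 : ℝ) < n by linarith)
        (show (1 : ℝ) < N + 1 by linarith) (by linarith)
    rw [one_div_mul_eq_div, div_lt_iff₀ (by positivity)]
    linarith
  rw [lt_div_iff₀ hL, sum_mul, ← sum_Icc_log_div_sub_one N]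
  exact sum_lt_sum_of_nonempty (nonempty_Icc.2 hN) hterm
end

section
/- For the symmetric Dirichlet Dir(C,...,C) with C ≥ 2 on K ≥ 2 classes, the aleatoric uncertainty (1/ln K)·Σ_{k=C+1}^{CK} 1/k is strictly greater than the vacuity 1/C. -/
/-!
Because `harmonic n - log (n + 1)` is strictly increasing in `n`, the sum
`∑_{k=C+1}^{CK} 1/k = H_{CK} - H_C` exceeds `log ((CK + 1) / (C + 1))`. For `C ≥ 2` the ratio
`(CK + 1) / (C + 1)` is at least `(2K + 1) / 3`, whose square is at least `K`; hence
`C · log ((CK + 1) / (C + 1)) ≥ log K`.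
-/

open Finset Real

lemma sum_Icc_one_div_eq_harmonic_sub {m n : ℕ} (hmn : m ≤ n) :
    ∑ k ∈ Icc (m + 1) n, (1 : ℝ) / k = harmonic n - harmonic m := by
  have harmonic_eq (j : ℕ) : (harmonic j : ℝ) = ∑ k ∈ Ioc 0 j, (1 : ℝ) / k := by
    simp [harmonic_eq_sum_Icc, ← Icc_add_one_left_eq_Ioc]
  rw [harmonic_eq, harmonic_eq, ← sum_Ioc_consecutive _ (Nat.zero_le m) hmn,
    Icc_add_one_left_eq_Ioc, add_sub_cancel_left]

lemma log_add_one_sub_log_add_one_lt_sum_Icc_one_div {m n : ℕ} (hmn : m < n) :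
    log (n + 1) - log (m + 1) < ∑ k ∈ Icc (m + 1) n, (1 : ℝ) / k := by
  have hmono := strictMono_eulerMascheroniSeq hmn
  rw [eulerMascheroniSeq, eulerMascheroniSeq] at hmono
  rw [sum_Icc_one_div_eq_harmonic_sub hmn.le]
  linarith

lemma le_mul_add_one_div_add_one_pow {n : ℕ} (hn : 2 ≤ n) {x : ℝ} (hx : 1 ≤ x) :
    x ≤ ((n * x + 1) / (n + 1)) ^ n := by
  have hn' : (2 : ℝ) ≤ n := by exact_mod_cast hn
  have hbase : (2 * x + 1) / 3 ≤ (n * x + 1) / (n + 1) := by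
    rw [div_le_div_iff₀ (by norm_num) (by positivity)]
    nlinarith [mul_nonneg (sub_nonneg.2 hn') (sub_nonneg.2 hx)]
  calc x ≤ ((2 * x + 1) / 3) ^ 2 := by nlinarith
    _ ≤ ((2 * x + 1) / 3) ^ n := pow_le_pow_right₀ (by linarith) hn
    _ ≤ ((n * x + 1) / (n + 1)) ^ n := pow_le_pow_left₀ (by positivity) hbase n

lemma log_div_le_log_mul_add_one_sub_log_add_one {n : ℕ} (hn : 2 ≤ n) {x : ℝ} (hx : 1 ≤ x) :
    log x / n ≤ log (n * x + 1) - log (n + 1) := by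
  rw [div_le_iff₀ (by positivity), ← log_div (by positivity) (by positivity), mul_comm, ← log_pow]
  exact log_le_log (by linarith) (le_mul_add_one_div_add_one_pow hn hx)

theorem aleatoric_gt_vacuity_symmetric (C K : ℕ) (hC : 2 ≤ C) (hK : 2 ≤ K) :
    (1 / Real.log K) * ∑ k ∈ Finset.Icc (C + 1) (C * K), (1 : ℝ) / k >
      1 / (C : ℝ) := by
  have hK' : (1 : ℝ) < K := by exact_mod_cast hK
  have hCK : C < C * K := lt_mul_of_one_lt_right (by omega) hK
  have hlog := log_div_le_log_mul_add_one_sub_log_add_one hC hK'.le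
  have hsum := log_add_one_sub_log_add_one_lt_sum_Icc_one_div hCK
  push_cast at hsum
  rw [gt_iff_lt, one_div_mul_eq_div, lt_div_iff₀ (log_pos hK'), one_div_mul_eq_div]
  linarith
end
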